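/- Let M = [[0,1],[0,a_2]] ∈ K^{2×2} with a_2 ≠ 0. Then the two matrices A_1 = [[0,0],[1,0]] and A_2 = [[1/a_2, 1],[−1/a_2², −1/a_2]] are linearly independent rank-one matrices trace-orthogonal to both I and M; hence span{I,M}^⊥ (dimension 2) is perfect. -/

import Mathlib

/-!
Both matrices are outer products of nonzero vectors, `A₁ = e₂ e₁ᵀ` and
`A₂ = (1, -a⁻¹)ᵀ (a⁻¹, 1)`, hence of rank one. Conversely, `Tr (N Iᵀ) = Tr (N Mᵀ) = 0` forces
`N = !![x, a * x; y, -x]`, which is `(y + x / a) • A₁ + (a * x) • A₂`.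
-/

open Matrix

namespace Matrix

theorem rank_eq_zero_iff {K m n : Type*} [Field K] [Fintype n] {A : Matrix m n K} :
    A.rank = 0 ↔ A = 0 := by
  classical
  rw [rank, Submodule.finrank_eq_zero, LinearMap.range_eq_bot, ← toLin'_apply',
    LinearEquiv.map_eq_zero_iff]

theorem rank_vecMulVec_eq_one {K m n : Type*} [Field K] [Fintype n] {w : m → K} {v : n → K}
    (hw : w ≠ 0) (hv : v ≠ 0) : (vecMulVec w v).rank = 1 := by
  refine le_antisymm (rank_vecMulVec_le w v) (Nat.one_le_iff_ne_zero.mpr ?_)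
  obtain ⟨i, hi⟩ := Function.ne_iff.mp hw
  obtain ⟨j, hj⟩ := Function.ne_iff.mp hv
  rw [Ne, rank_eq_zero_iff]
  exact fun h => mul_ne_zero hi hj congr($h i j)

theorem vecMulVec_fin_two {R : Type*} [Mul R] (w v : Fin 2 → R) :
    vecMulVec w v = !![w 0 * v 0, w 0 * v 1; w 1 * v 0, w 1 * v 1] :=
  eta_fin_two _

theorem trace_mul_transpose_fin_two {R : Type*} [NonUnitalNonAssocSemiring R]
    (A B : Matrix (Fin 2) (Fin 2) R) :
    trace (A * Bᵀ) = A 0 0 * B 0 0 + A 0 1 * B 0 1 + (A 1 0 * B 1 0 + A 1 1 * B 1 1) := by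
  simp [trace_fin_two, mul_apply, Fin.sum_univ_two]

end Matrix

section

variable {K : Type*} [Field K]

theorem vecMulVec_eq_single_one_zero :
    vecMulVec ![0, 1] ![1, 0] = (!![0, 0; 1, 0] : Matrix (Fin 2) (Fin 2) K) := by
  rw [vecMulVec_fin_two]
  simp

theorem vecMulVec_one_neg_inv_inv_one (a : K) :
    vecMulVec ![1, -a⁻¹] ![a⁻¹, 1] = (!![a⁻¹, 1; -a⁻¹ ^ 2, -a⁻¹] : Matrix (Fin 2) (Fin 2) K) := by
  rw [vecMulVec_fin_two]
  simp [sq]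

theorem linearIndependent_single_one_zero_nilpotent (a : K) :
    LinearIndependent K ![!![0, 0; 1, 0], !![a⁻¹, 1; -a⁻¹ ^ 2, -a⁻¹]] := by
  refine LinearIndependent.pair_iff.mpr fun s t h => ?_
  have h₀₁ := congr($h 0 1)
  have h₁₀ := congr($h 1 0)
  simp only [Matrix.zero_apply, Matrix.add_apply, Matrix.smul_apply, of_apply, cons_val',
    cons_val_zero, cons_val_one, cons_val_fin_one, smul_eq_mul] at h₀₁ h₁₀
  grind

theorem mem_span_of_trace_mul_transpose_eq_zero {a : K} (ha : a ≠ 0)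
    {N : Matrix (Fin 2) (Fin 2) K} (h₁ : trace (N * (1 : Matrix (Fin 2) (Fin 2) K)ᵀ) = 0)
    (h₂ : trace (N * !![0, 1; 0, a]ᵀ) = 0) :
    N ∈ Submodule.span K {!![0, 0; 1, 0], !![a⁻¹, 1; -a⁻¹ ^ 2, -a⁻¹]} := by
  rw [transpose_one, mul_one, trace_fin_two] at h₁
  rw [trace_mul_transpose_fin_two] at h₂
  simp only [of_apply, cons_val', cons_val_zero, cons_val_one, empty_val', cons_val_fin_one] at h₂
  have h₁₁ : N 1 1 = -N 0 0 := by linear_combination h₁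
  have h₀₁ : N 0 1 = a * N 0 0 := by linear_combination h₂ - a * h₁
  rw [Submodule.mem_span_pair]
  refine ⟨N 1 0 + a⁻¹ * N 0 0, a * N 0 0, ?_⟩
  ext i j
  fin_cases i <;> fin_cases j <;>
    simp only [Fin.zero_eta, Fin.mk_one, Matrix.add_apply, Matrix.smul_apply, of_apply, cons_val',
      cons_val_zero, cons_val_one, cons_val_fin_one, smul_eq_mul] <;> grind

end

theorem stmt14 {K : Type*} [Field K] (a2 : K) (ha : a2 ≠ 0) :
    LinearIndependent K
      ![(!![0, 0; 1, 0] : Matrix (Fin 2) (Fin 2) K),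
        (!![a2⁻¹, 1; -a2⁻¹ ^ 2, -a2⁻¹] : Matrix (Fin 2) (Fin 2) K)] ∧
    (!![0, 0; 1, 0] : Matrix (Fin 2) (Fin 2) K).rank = 1 ∧
    (!![a2⁻¹, 1; -a2⁻¹ ^ 2, -a2⁻¹] : Matrix (Fin 2) (Fin 2) K).rank = 1 ∧
    Matrix.trace ((!![0, 0; 1, 0] : Matrix (Fin 2) (Fin 2) K) *
      ((1 : Matrix (Fin 2) (Fin 2) K))ᵀ) = 0 ∧
    Matrix.trace ((!![0, 0; 1, 0] : Matrix (Fin 2) (Fin 2) K) *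
      (!![0, 1; 0, a2] : Matrix (Fin 2) (Fin 2) K)ᵀ) = 0 ∧
    Matrix.trace ((!![a2⁻¹, 1; -a2⁻¹ ^ 2, -a2⁻¹] : Matrix (Fin 2) (Fin 2) K) *
      ((1 : Matrix (Fin 2) (Fin 2) K))ᵀ) = 0 ∧
    Matrix.trace ((!![a2⁻¹, 1; -a2⁻¹ ^ 2, -a2⁻¹] : Matrix (Fin 2) (Fin 2) K) *
      (!![0, 1; 0, a2] : Matrix (Fin 2) (Fin 2) K)ᵀ) = 0 ∧
    ∀ N : Matrix (Fin 2) (Fin 2) K,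
      Matrix.trace (N * ((1 : Matrix (Fin 2) (Fin 2) K))ᵀ) = 0 →
      Matrix.trace (N * (!![0, 1; 0, a2] : Matrix (Fin 2) (Fin 2) K)ᵀ) = 0 →
      N ∈ Submodule.span K
        {(!![0, 0; 1, 0] : Matrix (Fin 2) (Fin 2) K),
         (!![a2⁻¹, 1; -a2⁻¹ ^ 2, -a2⁻¹] : Matrix (Fin 2) (Fin 2) K)} := by
  refine ⟨linearIndependent_single_one_zero_nilpotent a2, ?_, ?_, ?_, ?_, ?_, ?_,
    fun N h₁ h₂ => mem_span_of_trace_mul_transpose_eq_zero ha h₁ h₂⟩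
  · rw [← vecMulVec_eq_single_one_zero]
    exact rank_vecMulVec_eq_one (by simp) (by simp)
  · rw [← vecMulVec_one_neg_inv_inv_one]
    exact rank_vecMulVec_eq_one (by simp) (by simp)
  all_goals
    rw [trace_mul_transpose_fin_two]
    simp [ha]
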